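/- Let 0 ≤ a < 1, 0 ≤ b < 1 and 0 < κ < λ. Then there exists a constant C > 0, depending only on a, b, κ and λ, such that for every t > 0: ∫₀ᵗ (t−s)^{−a} e^{−λ(t−s)} (min{s,1})^{−b} e^{−κ s} ds ≤ C (min{t,1})^{1−a−b} e^{−κ t}. -/

import Mathlib

/-!
Write `μ = λ - κ`; pulling `e^{-κt}` out of the integrand leaves the kernel
`K(u) = u^{-a} e^{-μu}` against the weight `min{s,1}^{-b}`. With `m = min{t,1}`, the integrand is
at most `(m - s)^{-a} s^{-b}` for `s < m` and equals `K(t - s)` for `s ≥ m` (where `m = 1 ≤ s`).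
The first piece is a Beta integral: splitting at `m/2`, where one of the two factors is at most
its value at `m/2`, bounds it by a multiple of `m^{1-a-b}`. The second is at most
`∫₀ᵗ u^{-a} du = t^{1-a}/(1-a)` for `t ≤ 1` and at most `Γ(1-a) μ^{a-1}` always,
hence `O(m^{1-a}) ≤ O(m^{1-a-b})`.
-/

open MeasureTheory Set Real

section Reflection

variable {E : Type*} [NormedAddCommGroup E] {f : ℝ → E} {t : ℝ}

lemma integrableOn_Ioo_comp_sub_left (ht : 0 ≤ t) (hf : IntegrableOn f (Ioo 0 t)) :
    IntegrableOn (fun s => f (t - s)) (Ioo 0 t) := by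
  rw [← intervalIntegrable_iff_integrableOn_Ioo_of_le ht] at hf ⊢
  simpa using (hf.comp_sub_left t).symm

lemma setIntegral_Ioo_comp_sub_left [NormedSpace ℝ E] (ht : 0 ≤ t) :
    ∫ s in Ioo 0 t, f (t - s) = ∫ s in Ioo 0 t, f s := by
  simp only [← integral_Ioc_eq_integral_Ioo, ← intervalIntegral.integral_of_le ht,
    intervalIntegral.integral_comp_sub_left, sub_self, sub_zero]

end Reflection

lemma integrableOn_Ioo_rpow_neg {c t : ℝ} (hc : c < 1) (ht : 0 < t) :
    IntegrableOn (fun s => s ^ (-c)) (Ioo 0 t) :=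
  (intervalIntegral.integrableOn_Ioo_rpow_iff ht).2 (by linarith)

lemma setIntegral_Ioo_rpow_neg {c t : ℝ} (hc : c < 1) (ht : 0 ≤ t) :
    ∫ s in Ioo 0 t, s ^ (-c) = t ^ (1 - c) / (1 - c) := by
  rw [← integral_Ioc_eq_integral_Ioo, ← intervalIntegral.integral_of_le ht,
    integral_rpow (Or.inl (by linarith)), zero_rpow (by linarith), neg_add_eq_sub, sub_zero]

lemma rpow_neg_mul_rpow_neg_le_add {a b x y : ℝ} (ha : 0 ≤ a) (hb : 0 ≤ b) (hx : 0 < x)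
    (hy : 0 < y) :
    x ^ (-a) * y ^ (-b) ≤ ((x + y) / 2) ^ (-a) * y ^ (-b) + ((x + y) / 2) ^ (-b) * x ^ (-a) := by
  have hmid : 0 < (x + y) / 2 := by positivity
  rcases le_total ((x + y) / 2) x with hxm | hxm
  · have := rpow_le_rpow_of_nonpos hmid hxm (neg_nonpos.2 ha)
    have := mul_le_mul_of_nonneg_right this (rpow_nonneg hy.le (-b))
    have : 0 ≤ ((x + y) / 2) ^ (-b) * x ^ (-a) := by positivity
    linarith
  · have := rpow_le_rpow_of_nonpos hmid (by linarith : (x + y) / 2 ≤ y) (neg_nonpos.2 hb)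
    have := mul_le_mul_of_nonneg_left this (rpow_nonneg hx.le (-a))
    have : 0 ≤ ((x + y) / 2) ^ (-a) * y ^ (-b) := by positivity
    linarith

lemma half_rpow_neg_mul_rpow {m : ℝ} (hm : 0 < m) (a c : ℝ) :
    (m / 2) ^ (-a) * m ^ c = 2 ^ a * m ^ (c - a) := by
  rw [div_rpow hm.le zero_le_two, rpow_neg zero_le_two, div_inv_eq_mul, sub_eq_neg_add,
    rpow_add hm]
  ring

lemma integrableOn_Ioi_rpow_neg_mul_exp_neg_mul {a μ : ℝ} (ha : a < 1) (hμ : 0 < μ) :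
    IntegrableOn (fun u => u ^ (-a) * exp (-μ * u)) (Ioi 0) := by
  simpa using
    integrableOn_rpow_mul_exp_neg_mul_rpow (p := 1) (by linarith : -1 < -a) one_pos hμ

lemma integral_rpow_neg_mul_exp_neg_mul_Ioi {a μ : ℝ} (ha : a < 1) (hμ : 0 < μ) :
    ∫ u in Ioi 0, u ^ (-a) * exp (-μ * u) = (1 / μ) ^ (1 - a) * Gamma (1 - a) := by
  rw [← integral_rpow_mul_exp_neg_mul_Ioi (by linarith) hμ]
  simp only [sub_sub_cancel_left, neg_mul]

section Beta

variable {a b m : ℝ}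

lemma sub_rpow_neg_mul_rpow_neg_le_add (ha : 0 ≤ a) (hb : 0 ≤ b) {s : ℝ}
    (hs : s ∈ Ioo 0 m) :
    (m - s) ^ (-a) * s ^ (-b) ≤ (m / 2) ^ (-a) * s ^ (-b) + (m / 2) ^ (-b) * (m - s) ^ (-a) := by
  simpa using rpow_neg_mul_rpow_neg_le_add ha hb (sub_pos.2 hs.2) hs.1

lemma integrableOn_beta_majorant (ha : a < 1) (hb : b < 1) (hm : 0 < m) :
    IntegrableOn (fun s => (m / 2) ^ (-a) * s ^ (-b) + (m / 2) ^ (-b) * (m - s) ^ (-a))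
      (Ioo 0 m) :=
  ((integrableOn_Ioo_rpow_neg hb hm).const_mul _).add
    ((integrableOn_Ioo_comp_sub_left hm.le (integrableOn_Ioo_rpow_neg ha hm)).const_mul _)

lemma integral_beta_majorant (ha : a < 1) (hb : b < 1) (hm : 0 < m) :
    ∫ s in Ioo 0 m, ((m / 2) ^ (-a) * s ^ (-b) + (m / 2) ^ (-b) * (m - s) ^ (-a)) =
      (2 ^ a / (1 - b) + 2 ^ b / (1 - a)) * m ^ (1 - a - b) := by
  rw [integral_add ((integrableOn_Ioo_rpow_neg hb hm).const_mul _)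
      ((integrableOn_Ioo_comp_sub_left hm.le (integrableOn_Ioo_rpow_neg ha hm)).const_mul _),
    integral_const_mul, integral_const_mul,
    setIntegral_Ioo_comp_sub_left (f := fun s => s ^ (-a)) hm.le,
    setIntegral_Ioo_rpow_neg hb hm.le, setIntegral_Ioo_rpow_neg ha hm.le, mul_div_assoc',
    mul_div_assoc', half_rpow_neg_mul_rpow hm, half_rpow_neg_mul_rpow hm]
  ring_nf

lemma integrableOn_sub_rpow_neg_mul_rpow_neg (ha0 : 0 ≤ a) (ha1 : a < 1) (hb0 : 0 ≤ b)
    (hb1 : b < 1) (hm : 0 < m) :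
    IntegrableOn (fun s => (m - s) ^ (-a) * s ^ (-b)) (Ioo 0 m) := by
  refine (integrableOn_beta_majorant ha1 hb1 hm).mono' (by fun_prop) ?_
  filter_upwards [ae_restrict_mem measurableSet_Ioo] with s hs
  rw [Real.norm_of_nonneg (mul_nonneg (rpow_nonneg (sub_pos.2 hs.2).le _) (rpow_nonneg hs.1.le _))]
  exact sub_rpow_neg_mul_rpow_neg_le_add ha0 hb0 hs

lemma setIntegral_sub_rpow_neg_mul_rpow_neg_le (ha0 : 0 ≤ a) (ha1 : a < 1) (hb0 : 0 ≤ b)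
    (hb1 : b < 1) (hm : 0 < m) :
    ∫ s in Ioo 0 m, (m - s) ^ (-a) * s ^ (-b) ≤
      (2 ^ a / (1 - b) + 2 ^ b / (1 - a)) * m ^ (1 - a - b) :=
  integral_beta_majorant ha1 hb1 hm ▸ setIntegral_mono_on
    (integrableOn_sub_rpow_neg_mul_rpow_neg ha0 ha1 hb0 hb1 hm)
    (integrableOn_beta_majorant ha1 hb1 hm) measurableSet_Ioo
    (fun _ hs => sub_rpow_neg_mul_rpow_neg_le_add ha0 hb0 hs)

end Beta

lemma setIntegral_Ioo_rpow_neg_mul_exp_neg_mul_le {a μ t : ℝ} (ha : a < 1) (hμ : 0 < μ)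
    (ht : 0 < t) :
    ∫ u in Ioo 0 t, u ^ (-a) * exp (-μ * u) ≤
      (1 / (1 - a) + (1 / μ) ^ (1 - a) * Gamma (1 - a)) * min t 1 ^ (1 - a) := by
  have hK := integrableOn_Ioi_rpow_neg_mul_exp_neg_mul ha hμ
  have hΓ : 0 < Gamma (1 - a) := Gamma_pos_of_pos (by linarith)
  rcases le_or_gt t 1 with ht1 | ht1
  · rw [min_eq_left ht1]
    have hle : ∫ u in Ioo 0 t, u ^ (-a) * exp (-μ * u) ≤ ∫ u in Ioo 0 t, u ^ (-a) :=
      setIntegral_mono_on (hK.mono_set Ioo_subset_Ioi_self)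
        (integrableOn_Ioo_rpow_neg ha ht) measurableSet_Ioo fun u hu =>
        mul_le_of_le_one_right (rpow_nonneg hu.1.le _)
          (exp_le_one_iff.2 (by nlinarith [hu.1]))
    rw [setIntegral_Ioo_rpow_neg ha ht.le, div_eq_inv_mul, ← one_div] at hle
    have : 0 ≤ (1 / μ) ^ (1 - a) * Gamma (1 - a) * t ^ (1 - a) := by positivity
    linarith
  · rw [min_eq_right ht1.le, one_rpow, mul_one]
    calc ∫ u in Ioo 0 t, u ^ (-a) * exp (-μ * u)
        ≤ ∫ u in Ioi 0, u ^ (-a) * exp (-μ * u) :=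
          setIntegral_mono_set hK
            (by filter_upwards [ae_restrict_mem measurableSet_Ioi] with u hu
                exact mul_nonneg (rpow_nonneg (le_of_lt hu) _) (exp_pos _).le)
            Ioo_subset_Ioi_self.eventuallyLE
      _ = (1 / μ) ^ (1 - a) * Gamma (1 - a) := integral_rpow_neg_mul_exp_neg_mul_Ioi ha hμ
      _ ≤ _ := le_add_of_nonneg_left (by bound)

lemma setIntegral_kernel_mul_min_rpow_neg_le {a b μ t : ℝ} (ha0 : 0 ≤ a) (ha1 : a < 1)
    (hb0 : 0 ≤ b) (hb1 : b < 1) (hμ : 0 < μ) (ht : 0 < t) :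
    ∫ s in Ioo 0 t, (t - s) ^ (-a) * exp (-μ * (t - s)) * min s 1 ^ (-b) ≤
      (2 ^ a / (1 - b) + 2 ^ b / (1 - a) + (1 / (1 - a) + (1 / μ) ^ (1 - a) * Gamma (1 - a)))
        * min t 1 ^ (1 - a - b) := by
  set m := min t 1
  have hm : 0 < m := lt_min ht one_pos
  set K : ℝ → ℝ := fun u => u ^ (-a) * exp (-μ * u)
  set β : ℝ → ℝ := fun s => (m - s) ^ (-a) * s ^ (-b)
  have hdom : ∀ s ∈ Ioo 0 t, (t - s) ^ (-a) * exp (-μ * (t - s)) * min s 1 ^ (-b) ≤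
      (Iio m).indicator β s + K (t - s) := by
    rintro s ⟨hs0, hst⟩
    have hK : 0 ≤ K (t - s) := by positivity
    by_cases hsm : s < m
    · have hs1 : s < 1 := hsm.trans_le (min_le_right _ _)
      rw [indicator_of_mem (mem_Iio.2 hsm), min_eq_left hs1.le]
      have hkernel : (t - s) ^ (-a) * exp (-μ * (t - s)) ≤ (m - s) ^ (-a) :=
        (mul_le_of_le_one_right (by positivity) (exp_le_one_iff.2 (by nlinarith))).trans
          (rpow_le_rpow_of_nonpos (sub_pos.2 hsm) (by linarith [min_le_left t 1])
            (neg_nonpos.2 ha0))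
      have := mul_le_mul_of_nonneg_right hkernel (rpow_nonneg hs0.le (-b))
      linarith
    · have hs1 : 1 ≤ s := (min_le_iff.1 (not_lt.1 hsm)).resolve_left (not_le.2 hst)
      rw [indicator_of_notMem (notMem_Iio.2 (not_lt.1 hsm)), min_eq_right hs1, one_rpow, mul_one,
        zero_add]
  have hβ := integrableOn_sub_rpow_neg_mul_rpow_neg ha0 ha1 hb0 hb1 hm
  have hKt : IntegrableOn (fun s => K (t - s)) (Ioo 0 t) :=
    integrableOn_Ioo_comp_sub_left ht.le
      ((integrableOn_Ioi_rpow_neg_mul_exp_neg_mul ha1 hμ).mono_set Ioo_subset_Ioi_self)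
  have hβt : IntegrableOn ((Iio m).indicator β) (Ioo 0 t) := by
    rw [IntegrableOn, integrable_indicator_iff measurableSet_Iio, IntegrableOn,
      Measure.restrict_restrict measurableSet_Iio, inter_comm, Ioo_inter_Iio,
      min_eq_right (min_le_left t 1)]
    exact hβ
  calc ∫ s in Ioo 0 t, (t - s) ^ (-a) * exp (-μ * (t - s)) * min s 1 ^ (-b)
      ≤ ∫ s in Ioo 0 t, ((Iio m).indicator β s + K (t - s)) :=
        integral_mono_of_nonneg
          (by filter_upwards [ae_restrict_mem measurableSet_Ioo] with s hs
              exact mul_nonneg (mul_nonneg (rpow_nonneg (sub_pos.2 hs.2).le _) (exp_pos _).le)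
                (rpow_nonneg (le_min hs.1.le zero_le_one) _))
          (hβt.add hKt) ((ae_restrict_mem measurableSet_Ioo).mono hdom)
    _ = (∫ s in Ioo 0 m, β s) + ∫ u in Ioo 0 t, K u := by
        rw [integral_add hβt hKt, setIntegral_indicator measurableSet_Iio, Ioo_inter_Iio,
          min_eq_right (min_le_left t 1), setIntegral_Ioo_comp_sub_left ht.le]
    _ ≤ (2 ^ a / (1 - b) + 2 ^ b / (1 - a)) * m ^ (1 - a - b)
          + (1 / (1 - a) + (1 / μ) ^ (1 - a) * Gamma (1 - a)) * m ^ (1 - a) :=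
        add_le_add (setIntegral_sub_rpow_neg_mul_rpow_neg_le ha0 ha1 hb0 hb1 hm)
          (setIntegral_Ioo_rpow_neg_mul_exp_neg_mul_le ha1 hμ ht)
    _ ≤ _ := by
        have hmm : m ^ (1 - a) ≤ m ^ (1 - a - b) :=
          rpow_le_rpow_of_exponent_ge hm (min_le_right t 1) (by linarith)
        have hG : 0 ≤ 1 / (1 - a) + (1 / μ) ^ (1 - a) * Gamma (1 - a) := by
          have : 0 < Gamma (1 - a) := Gamma_pos_of_pos (by linarith)
          positivity
        nlinarith [mul_le_mul_of_nonneg_left hmm hG]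

theorem convolution_min_weight_decay_estimate_general
    (a b κ lam : ℝ) (ha0 : 0 ≤ a) (ha1 : a < 1) (hb0 : 0 ≤ b) (hb1 : b < 1)
    (hκlam : κ < lam) :
    ∃ C > 0, ∀ t : ℝ, 0 < t →
      (∫ s in Set.Ioo (0:ℝ) t,
          (t - s) ^ (-a) * Real.exp (-lam * (t - s)) * (min s 1) ^ (-b) * Real.exp (-κ * s))
        ≤ C * (min t 1) ^ (1 - a - b) * Real.exp (-κ * t) := by
  have hμ : 0 < lam - κ := sub_pos.2 hκlam
  refine ⟨2 ^ a / (1 - b) + 2 ^ b / (1 - a)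
      + (1 / (1 - a) + (1 / (lam - κ)) ^ (1 - a) * Gamma (1 - a)), ?_, fun t ht => ?_⟩
  · have : 0 < 1 - b := by linarith
    positivity
  have hfactor : ∀ s, (t - s) ^ (-a) * exp (-lam * (t - s)) * min s 1 ^ (-b) * exp (-κ * s) =
      exp (-κ * t) * ((t - s) ^ (-a) * exp (-(lam - κ) * (t - s)) * min s 1 ^ (-b)) := by
    intro s
    have hexp :
        exp (-lam * (t - s)) * exp (-κ * s) = exp (-κ * t) * exp (-(lam - κ) * (t - s)) := by
      rw [← exp_add, ← exp_add]
      ring_nf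
    linear_combination (t - s) ^ (-a) * min s 1 ^ (-b) * hexp
  simp_rw [hfactor, integral_const_mul]
  rw [mul_comm _ (exp (-κ * t))]
  exact mul_le_mul_of_nonneg_left
    (setIntegral_kernel_mul_min_rpow_neg_le ha0 ha1 hb0 hb1 hμ ht) (exp_pos _).le

/-- Weighted convolution estimate with exponential decay: a weakly singular kernel
`(t-s)^{-a} e^{-λ(t-s)}` convolved against the decaying weight `min{s,1}^{-b} e^{-κ s}`. -/
theorem convolution_min_weight_decay_estimate
    (a b κ lam : ℝ) (ha0 : 0 ≤ a) (ha1 : a < 1) (hb0 : 0 ≤ b) (hb1 : b < 1)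
    (hκ : 0 < κ) (hκlam : κ < lam) :
    ∃ C > 0, ∀ t : ℝ, 0 < t →
      (∫ s in Set.Ioo (0:ℝ) t,
          (t - s) ^ (-a) * Real.exp (-lam * (t - s)) * (min s 1) ^ (-b) * Real.exp (-κ * s))
        ≤ C * (min t 1) ^ (1 - a - b) * Real.exp (-κ * t) :=
  convolution_min_weight_decay_estimate_general a b κ lam ha0 ha1 hb0 hb1 hκlam
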